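/- Let f : ℕ → ℝ satisfy f(n) ≤ f(⌈Real.sqrt n⌉) + c · (Real.logb 2 n) / w for all n ≥ 4, and f(n) ≤ c / w for n < 4, where c ≥ 0 and w ≥ 1. Then f(n) ≤ 3 · c · (Real.logb 2 n) / w for all n ≥ 4. -/

import Mathlib

/-!
Strong induction on `n`. With `m = ⌈√n⌉₊` we have `(m - 1)² < n`, and for `m ≥ 4` also
`m³ ≤ (m - 1)⁴`, so `m³ < n²`, i.e. `3 log m ≤ 2 log n`: the inductive bound `3 c log m / w`
for `f m` is at most `2 c log n / w`, leaving room for the additive `c log n / w`. When `m < 4`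
the base value `c / w` is absorbed since `log₂ n ≥ 2`.
-/

open Real

theorem Nat.pow_three_le_sub_one_pow_four {m : ℕ} (hm : 4 ≤ m) : m ^ 3 ≤ (m - 1) ^ 4 := by
  obtain ⟨k, rfl⟩ := Nat.exists_eq_add_of_le hm
  simp only [show 4 + k - 1 = 3 + k by omega]
  ring_nf
  nlinarith [Nat.zero_le k]

theorem Nat.ceil_sqrt_sub_one_sq_lt {n : ℕ} (hn : 0 < ⌈√(n : ℝ)⌉₊) :
    (⌈√(n : ℝ)⌉₊ - 1) ^ 2 < n := by
  have h : ((⌈√(n : ℝ)⌉₊ - 1 : ℕ) : ℝ) < √n := Nat.lt_ceil.mp (by omega)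
  exact_mod_cast (Real.lt_sqrt (Nat.cast_nonneg _)).mp h

theorem Nat.ceil_sqrt_pow_three_lt_sq {n : ℕ} (hm : 4 ≤ ⌈√(n : ℝ)⌉₊) :
    ⌈√(n : ℝ)⌉₊ ^ 3 < n ^ 2 :=
  calc ⌈√(n : ℝ)⌉₊ ^ 3 ≤ ((⌈√(n : ℝ)⌉₊ - 1) ^ 2) ^ 2 := by
        rw [← pow_mul]; exact Nat.pow_three_le_sub_one_pow_four hm
    _ < n ^ 2 := by gcongr; exact Nat.ceil_sqrt_sub_one_sq_lt (by omega)

theorem Real.mul_logb_le_mul_logb_of_pow_le_pow {b x y : ℝ} {p q : ℕ} (hb : 1 < b) (hx : 0 < x)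
    (h : x ^ p ≤ y ^ q) : p * logb b x ≤ q * logb b y := by
  rw [← logb_pow, ← logb_pow]
  exact logb_le_logb_of_le hb (by positivity) h

theorem Real.two_le_logb_two_of_four_le {x : ℝ} (hx : 4 ≤ x) : 2 ≤ logb 2 x :=
  calc (2 : ℝ) = logb 2 (2 ^ 2) := by rw [logb_pow, logb_self_eq_one one_lt_two]; norm_num
    _ ≤ logb 2 x := logb_le_logb_of_le one_lt_two (by norm_num) (by linarith)

theorem stmt_2 (f : ℕ → ℝ) (c w : ℝ) (hc : 0 ≤ c) (hw : 1 ≤ w)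
    (hrec : ∀ n : ℕ, 4 ≤ n → f n ≤ f ⌈Real.sqrt n⌉₊ + c * Real.logb 2 n / w)
    (hbase : ∀ n : ℕ, n < 4 → f n ≤ c / w) :
    ∀ n : ℕ, 4 ≤ n → f n ≤ 3 * c * Real.logb 2 n / w := by
  have hw0 : 0 < w := by linarith
  intro n
  induction n using Nat.strong_induction_on with
  | _ n ih =>
  intro hn
  have hstep := hrec n hn
  have hlogn : 2 ≤ logb 2 n := two_le_logb_two_of_four_le (by exact_mod_cast hn)
  set m := ⌈√(n : ℝ)⌉₊
  rcases lt_or_ge m 4 with hm | hm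
  · calc f n ≤ (c + c * logb 2 n) / w := by rw [add_div]; linarith [hbase m hm]
      _ ≤ 3 * c * logb 2 n / w := by gcongr; nlinarith
  · have hcube : m ^ 3 < n ^ 2 := Nat.ceil_sqrt_pow_three_lt_sq hm
    have hmn : m < n := (Nat.pow_lt_pow_iff_left two_ne_zero).mp
      (lt_of_le_of_lt (Nat.pow_le_pow_right (by omega) (by norm_num)) hcube)
    have hlogm : 3 * logb 2 m ≤ 2 * logb 2 n := by
      exact_mod_cast mul_logb_le_mul_logb_of_pow_le_pow one_lt_two
        (by exact_mod_cast (by omega : 0 < m)) (by exact_mod_cast hcube.le)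
    calc f n ≤ (3 * c * logb 2 m + c * logb 2 n) / w := by rw [add_div]; linarith [ih m hmn hm]
      _ ≤ 3 * c * logb 2 n / w := by gcongr; nlinarith [mul_le_mul_of_nonneg_left hlogm hc]
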